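/- Let G be an additive abelian group, Q a finitely generated saturated submonoid of G, r a natural number, and φ : (Fin r → ℕ) →+ G an additive monoid homomorphism of Kummer type into Q. Then ℤ[Q] is a free module over ℤ[Fin r → ℕ] via the induced ring homomorphism; moreover the subgroup of G generated by the image of φ has finite index in the subgroup of G generated by Q, and the rank of this free module equals that index. -/

import Mathlib

/-- A submonoid `Q` of an additive abelian group `G` is *saturated* if every element `g` of the
subgroup of `G` generated by `Q` such that `n • g ∈ Q` for some integer `n ≥ 1` lies in `Q`. -/
def IsSaturated {G : Type*} [AddCommGroup G] (Q : AddSubmonoid G) : Prop :=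
  ∀ g ∈ AddSubgroup.closure (Q : Set G), (∃ n : ℤ, 1 ≤ n ∧ n • g ∈ Q) → g ∈ Q

/-- An additive monoid homomorphism `φ : (Fin r → ℕ) →+ G` is *of Kummer type into `Q`* if it is
injective, its image is contained in `Q`, and every `q ∈ Q` has a positive integer multiple in the
image of `φ`. -/
def IsKummerType {G : Type*} [AddCommGroup G] {r : ℕ} (φ : (Fin r → ℕ) →+ G)
    (Q : AddSubmonoid G) : Prop :=
  Function.Injective φ ∧ (∀ x, φ x ∈ Q) ∧
    ∀ q ∈ Q, ∃ n : ℤ, 1 ≤ n ∧ n • q ∈ Set.range φ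

/-!
Write `T = Q^gp / P^gp` with `P = φ(ℕ^r)`. Since every element of `Q` has a multiple in `P`, the map
`Q → T` is onto and `T` is a finitely generated torsion group, hence finite. Inside a fibre
`Q ∩ (q + P^gp)`, saturation lets one cancel common `ℕ^r`-coordinates: any two elements have a
common lower bound `h` in the fibre with `p = h + φ x`, `p' = h + φ y`. The Kummer condition bounds
the fibre from below, so it has a least element `m_t` and equals `m_t + φ(ℕ^r)`. Hence
`(t, a) ↦ m_t + φ a` is a bijection `T × ℕ^r ≃ Q` compatible with the action of `ℕ^r`, so the
monomials `m_t` form a basis of `ℤ[Q]` over `ℤ[ℕ^r]`.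
-/

open Function

section

variable {G : Type*} [AddCommGroup G]

namespace AddSubmonoid

theorem mem_addSubgroupClosure_iff {Q : AddSubmonoid G} {g : G} :
    g ∈ AddSubgroup.closure (Q : Set G) ↔ ∃ a ∈ Q, ∃ b ∈ Q, g = a - b := by
  refine ⟨fun hg ↦ ?_, ?_⟩
  · induction hg using AddSubgroup.closure_induction with
    | mem a ha => exact ⟨a, ha, 0, Q.zero_mem, (sub_zero a).symm⟩
    | zero => exact ⟨0, Q.zero_mem, 0, Q.zero_mem, (sub_zero 0).symm⟩
    | add _ _ _ _ ihx ihy =>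
      obtain ⟨a, ha, b, hb, rfl⟩ := ihx
      obtain ⟨c, hc, d, hd, rfl⟩ := ihy
      exact ⟨a + c, add_mem ha hc, b + d, add_mem hb hd, (add_sub_add_comm a c b d).symm⟩
    | neg _ _ ih =>
      obtain ⟨a, ha, b, hb, rfl⟩ := ih
      exact ⟨b, hb, a, ha, neg_sub a b⟩
  · rintro ⟨a, ha, b, hb, rfl⟩
    exact sub_mem (AddSubgroup.subset_closure ha) (AddSubgroup.subset_closure hb)

def toQuotient (Q : AddSubmonoid G) (P : AddSubgroup G) :
    Q →+ AddSubgroup.closure (Q : Set G) ⧸ P.addSubgroupOf (AddSubgroup.closure (Q : Set G)) where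
  toFun q := QuotientAddGroup.mk ⟨q, AddSubgroup.subset_closure q.2⟩
  map_zero' := rfl
  map_add' _ _ := rfl

variable (Q : AddSubmonoid G) {P : AddSubgroup G}

theorem toQuotient_eq_iff {p q : Q} : Q.toQuotient P p = Q.toQuotient P q ↔ (p - q : G) ∈ P :=
  QuotientAddGroup.eq.trans <| AddSubgroup.mem_addSubgroupOf.trans <| by
    rw [AddSubgroup.coe_add, AddSubgroup.coe_neg, neg_add_eq_sub, sub_mem_comm_iff]

theorem toQuotient_eq_zero_iff {q : Q} : Q.toQuotient P q = 0 ↔ (q : G) ∈ P :=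
  (QuotientAddGroup.eq_zero_iff _).trans AddSubgroup.mem_addSubgroupOf

variable {Q}

theorem toQuotient_surjective (hP : ∀ q ∈ Q, ∃ n ≠ 0, n • q ∈ P) :
    Surjective (Q.toQuotient P) := by
  intro c
  obtain ⟨⟨g, hg⟩, rfl⟩ := QuotientAddGroup.mk_surjective c
  obtain ⟨a, ha, b, hb, rfl⟩ := mem_addSubgroupClosure_iff.1 hg
  obtain ⟨n, hn, hnb⟩ := hP b hb
  obtain ⟨k, rfl⟩ := Nat.exists_eq_succ_of_ne_zero hn
  -- `a - b` and `a + k • b` differ by `(k + 1) • b ∈ P`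
  refine ⟨⟨a + k • b, add_mem ha (nsmul_mem hb k)⟩, QuotientAddGroup.eq.2 ?_⟩
  rw [AddSubgroup.mem_addSubgroupOf]
  convert neg_mem hnb using 1
  simp only [AddSubgroup.coe_add, AddSubgroup.coe_neg, succ_nsmul]
  abel

theorem finite_quotient (hQ : Q.FG) (hP : ∀ q ∈ Q, ∃ n ≠ 0, n • q ∈ P) :
    Finite (AddSubgroup.closure (Q : Set G) ⧸
      P.addSubgroupOf (AddSubgroup.closure (Q : Set G))) := by
  have := (AddMonoid.fg_iff_addSubmonoid_fg Q).2 hQ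
  have := AddGroup.fg_iff_addMonoid_fg.2 (AddMonoid.fg_of_surjective _ (toQuotient_surjective hP))
  refine AddCommGroup.finite_of_fg_isAddTorsion _ fun c ↦ ?_
  obtain ⟨q, rfl⟩ := toQuotient_surjective hP c
  obtain ⟨n, hn, hnq⟩ := hP q q.2
  exact isOfFinAddOrder_iff_nsmul_eq_zero.2
    ⟨n, Nat.pos_of_ne_zero hn, by rw [← map_nsmul, toQuotient_eq_zero_iff]; exact hnq⟩

end AddSubmonoid

theorem AddMonoidHom.mem_addSubgroupClosure_range_iff {M : Type*} [AddMonoid M] (φ : M →+ G)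
    {g : G} : g ∈ AddSubgroup.closure (Set.range φ) ↔ ∃ x y, g = φ x - φ y := by
  simp [← AddMonoidHom.coe_mrange, AddSubmonoid.mem_addSubgroupClosure_iff]

namespace AddMonoidAlgebra

variable {R M N ι : Type*} [CommSemiring R] [AddCommMonoid M] [AddCommMonoid N]

theorem bijective_linearCombination_single (ψ : M →+ N) (rep : ι → N)
    (h : Bijective fun p : ι × M ↦ rep p.1 + ψ p.2) :
    letI := (mapDomainRingHom R ψ).toAlgebra
    Bijective (Finsupp.linearCombination R[M] fun i ↦ single (rep i) (1 : R)) := by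
  let _ := (mapDomainRingHom R ψ).toAlgebra
  let e : (ι →₀ R[M]) ≃+ R[N] :=
    (Finsupp.mapRange.addEquiv coeffAddEquiv).trans <| Finsupp.curryAddEquiv.symm.trans <|
      (Finsupp.domCongr (Equiv.ofBijective _ h)).trans coeffAddEquiv.symm
  convert e.bijective
  suffices (Finsupp.linearCombination R[M] fun i ↦ single (rep i) (1 : R)).toAddMonoidHom =
      e.toAddMonoidHom from congrArg DFunLike.coe this
  ext i a k
  simp [e, Algebra.smul_def, RingHom.algebraMap_toAlgebra, add_comm]

noncomputable def basisOfBijective (ψ : M →+ N) (rep : ι → N)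
    (h : Bijective fun p : ι × M ↦ rep p.1 + ψ p.2) :
    letI := (mapDomainRingHom R ψ).toAlgebra
    Module.Basis ι R[M] R[N] :=
  letI := (mapDomainRingHom R ψ).toAlgebra
  .ofRepr (LinearEquiv.ofBijective _ (bijective_linearCombination_single ψ rep h)).symm

end AddMonoidAlgebra

theorem IsSaturated.mem_of_nsmul_mem {Q : AddSubmonoid G} (hQ : IsSaturated Q) {g : G}
    (hg : g ∈ AddSubgroup.closure (Q : Set G)) {n : ℕ} (hn : n ≠ 0) (h : n • g ∈ Q) : g ∈ Q :=
  hQ g hg ⟨n, by omega, by rwa [natCast_zsmul]⟩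

variable {Q : AddSubmonoid G} {r : ℕ} {φ : (Fin r → ℕ) →+ G}

theorem IsKummerType.exists_nsmul_eq (hφ : IsKummerType φ Q) {q : G} (hq : q ∈ Q) :
    ∃ n ≠ 0, ∃ u, n • q = φ u := by
  obtain ⟨n, hn, u, hu⟩ := hφ.2.2 q hq
  lift n to ℕ using by omega
  exact ⟨n, by omega, u, by rw [hu, natCast_zsmul]⟩

theorem IsKummerType.exists_nsmul_mem_closure (hφ : IsKummerType φ Q) :
    ∀ q ∈ Q, ∃ n ≠ 0, n • q ∈ AddSubgroup.closure (Set.range φ) := fun _ hq ↦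
  let ⟨n, hn, u, hu⟩ := hφ.exists_nsmul_eq hq
  ⟨n, hn, hu ▸ AddSubgroup.subset_closure ⟨u, rfl⟩⟩

theorem IsKummerType.le_of_map_eq_add (hφ : IsKummerType φ Q) {q : G} (hq : q ∈ Q)
    {x y : Fin r → ℕ} (h : φ y = q + φ x) : x ≤ y := by
  obtain ⟨n, hn, u, hu⟩ := hφ.exists_nsmul_eq hq
  have hnat : n • y = u + n • x := hφ.1 <| by simp only [map_nsmul, map_add, h, ← hu, nsmul_add]
  intro i
  have := congrFun hnat i
  simp only [Pi.smul_apply, Pi.add_apply, smul_eq_mul] at this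
  exact Nat.le_of_mul_le_mul_left (by omega) (Nat.pos_of_ne_zero hn)

theorem IsKummerType.exists_eq_add_map_of_sub_mem (hQ : IsSaturated Q) (hφ : IsKummerType φ Q)
    {p p' : G} (hp : p ∈ Q) (hp' : p' ∈ Q) (hpp' : p - p' ∈ AddSubgroup.closure (Set.range φ)) :
    ∃ h ∈ Q, ∃ x y, p = h + φ x ∧ p' = h + φ y := by
  obtain ⟨x₀, y₀, hxy₀⟩ := φ.mem_addSubgroupClosure_range_iff.1 hpp'
  set x := x₀ - y₀
  set y := y₀ - x₀
  have hxy : x₀ + y = y₀ + x :=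
    funext fun i ↦ by simp only [Pi.add_apply, Pi.sub_apply, x, y]; omega
  have hdisj : ∀ i, x i = 0 ∨ y i = 0 := fun i ↦ by simp only [Pi.sub_apply, x, y]; omega
  have hcommon : p - φ x = p' - φ y := by
    have := congrArg φ hxy
    rw [map_add, map_add] at this
    linear_combination (norm := abel) hxy₀ + this
  obtain ⟨n₁, hn₁, u₁, hu₁⟩ := hφ.exists_nsmul_eq hp
  obtain ⟨n₂, hn₂, u₂, hu₂⟩ := hφ.exists_nsmul_eq hp'
  set n := n₁ * n₂
  have hu : n • p = φ (n₂ • u₁) := by rw [map_nsmul, ← hu₁, smul_smul, mul_comm]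
  have hv : n • p' = φ (n₁ • u₂) := by rw [map_nsmul, ← hu₂, smul_smul]
  have hnat : n₂ • u₁ + n • y = n₁ • u₂ + n • x := hφ.1 <| by
    rw [map_add, map_add, ← hu, ← hv, map_nsmul, map_nsmul, ← nsmul_add, ← nsmul_add,
      (sub_eq_sub_iff_add_eq_add.1 hcommon)]
  -- `x` and `y` have disjoint supports, so `hnat` forces `n • x ≤ n₂ • u₁`; then saturation
  -- puts `p - φ x` in `Q`, its `n`-th multiple being `φ (n₂ • u₁ - n • x)`
  have hle : n • x ≤ n₂ • u₁ := fun i ↦ by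
    have := congrFun hnat i
    simp only [Pi.add_apply, Pi.smul_apply, smul_eq_mul] at this ⊢
    rcases hdisj i with h | h <;> simp only [h] at this ⊢ <;> omega
  refine ⟨p - φ x, hQ.mem_of_nsmul_mem ?_ (mul_ne_zero hn₁ hn₂) ?_, x, y, by abel,
    by rw [hcommon]; abel⟩
  · exact sub_mem (AddSubgroup.subset_closure hp) (AddSubgroup.subset_closure (hφ.2.1 x))
  · have : n • (p - φ x) = φ (n₂ • u₁ - n • x) := by
      rw [smul_sub, hu, ← map_nsmul, sub_eq_iff_eq_add, ← map_add, tsub_add_cancel_of_le hle]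
    exact this ▸ hφ.2.1 _

theorem IsKummerType.exists_least_mem_coset (hQ : IsSaturated Q) (hφ : IsKummerType φ Q)
    {p₀ : G} (hp₀ : p₀ ∈ Q) :
    ∃ m ∈ Q, ∃ a, p₀ = m + φ a ∧
      ∀ p ∈ Q, p - m ∈ AddSubgroup.closure (Set.range φ) → ∃ b, p = m + φ b := by
  obtain ⟨n, hn, u, hu⟩ := hφ.exists_nsmul_eq hp₀
  let A : Set (Fin r → ℕ) := {a | ∃ m ∈ Q, p₀ = m + φ a}
  have hA : A ⊆ Set.Iic u := by
    rintro a ⟨m, hm, rfl⟩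
    have hna : n • a ≤ u :=
      hφ.le_of_map_eq_add (nsmul_mem hm n) (by rw [← hu, nsmul_add, map_nsmul])
    exact le_trans (fun i ↦ Nat.le_mul_of_pos_left _ (Nat.pos_of_ne_zero hn)) hna
  obtain ⟨a, ⟨m, hm, ha⟩, hmax⟩ :=
    ((Set.finite_Iic u).subset hA).exists_maximal ⟨0, p₀, hp₀, by rw [map_zero, add_zero]⟩
  have hmin : ∀ m' ∈ Q, ∀ b, m = m' + φ b → b = 0 := by
    intro m' hm' b hb
    have hab : a + b ≤ a := hmax ⟨m', hm', by rw [ha, hb, map_add, add_assoc, add_comm (φ b)]⟩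
      le_self_add
    simpa using hab
  refine ⟨m, hm, a, ha, fun p hp hpm ↦ ?_⟩
  obtain ⟨h, hh, x, y, hx, hy⟩ := hφ.exists_eq_add_map_of_sub_mem hQ hp hm hpm
  obtain rfl := hmin h hh y hy
  exact ⟨x, by rw [hx, hy, map_zero, add_zero]⟩

theorem IsKummerType.exists_bijective_add (hQ : IsSaturated Q) (hφ : IsKummerType φ Q) :
    ∃ rep : AddSubgroup.closure (Q : Set G) ⧸
        (AddSubgroup.closure (Set.range φ)).addSubgroupOf (AddSubgroup.closure (Q : Set G)) → Q,
      Bijective fun p : _ × (Fin r → ℕ) ↦ rep p.1 + φ.codRestrict Q hφ.2.1 p.2 := by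
  set π := Q.toQuotient (AddSubgroup.closure (Set.range φ))
  have hπφ (a) : π (φ.codRestrict Q hφ.2.1 a) = 0 :=
    (Q.toQuotient_eq_zero_iff).2 (AddSubgroup.subset_closure ⟨a, rfl⟩)
  have hleast (c) :
      ∃ m : Q, π m = c ∧ ∀ p : Q, π p = c → ∃ b, p = m + φ.codRestrict Q hφ.2.1 b := by
    obtain ⟨q, rfl⟩ := AddSubmonoid.toQuotient_surjective hφ.exists_nsmul_mem_closure c
    obtain ⟨m, hm, a, hqa, hfibre⟩ := hφ.exists_least_mem_coset hQ q.2
    have hq : q = ⟨m, hm⟩ + φ.codRestrict Q hφ.2.1 a := Subtype.ext hqa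
    refine ⟨⟨m, hm⟩, by rw [hq, map_add, hπφ, add_zero], fun p hp ↦ ?_⟩
    rw [hq, map_add, hπφ, add_zero, Q.toQuotient_eq_iff] at hp
    obtain ⟨b, hb⟩ := hfibre p p.2 hp
    exact ⟨b, Subtype.ext hb⟩
  choose rep hrep hrep_least using hleast
  refine ⟨rep, ?_, fun q ↦ ?_⟩
  · rintro ⟨c, a⟩ ⟨c', a'⟩ h
    obtain rfl : c = c' := by
      simpa only [map_add, hπφ, add_zero, hrep] using congrArg π h
    exact Prod.ext rfl (hφ.1 (congrArg Subtype.val (add_left_cancel h)))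
  · obtain ⟨b, hb⟩ := hrep_least (π q) q rfl
    exact ⟨(π q, b), hb.symm⟩

end

/-- Refinement of Lemma 2.6: `ℤ[Q]` is a free `ℤ[ℕ^r]`-module, the subgroup generated by the
image of `φ` has finite index in the subgroup generated by `Q`, and the rank of the free module
is this index `|Q^gp / P^gp|`. -/
theorem free_rank_eq_index_of_kummerType
    {G : Type*} [AddCommGroup G] (Q : AddSubmonoid G) (hQfg : Q.FG) (hQsat : IsSaturated Q)
    {r : ℕ} (φ : (Fin r → ℕ) →+ G) (hφ : IsKummerType φ Q) :
    let ψ : (Fin r → ℕ) →+ Q := (φ.codRestrict Q hφ.2.1)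
    let f : AddMonoidAlgebra ℤ (Fin r → ℕ) →+* AddMonoidAlgebra ℤ Q :=
      AddMonoidAlgebra.mapDomainRingHom ℤ ψ
    letI := f.toAlgebra
    let Pgp : AddSubgroup G := AddSubgroup.closure (Set.range φ)
    let Qgp : AddSubgroup G := AddSubgroup.closure (Q : Set G)
    Module.Free (AddMonoidAlgebra ℤ (Fin r → ℕ)) (AddMonoidAlgebra ℤ Q) ∧
      (Pgp.addSubgroupOf Qgp).index ≠ 0 ∧
      Module.rank (AddMonoidAlgebra ℤ (Fin r → ℕ)) (AddMonoidAlgebra ℤ Q) =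
        (Pgp.addSubgroupOf Qgp).index := by
  intro ψ f
  let _ := f.toAlgebra
  obtain ⟨rep, hrep⟩ := hφ.exists_bijective_add hQsat
  have := AddSubmonoid.finite_quotient hQfg hφ.exists_nsmul_mem_closure
  let b := AddMonoidAlgebra.basisOfBijective (R := ℤ) ψ rep hrep
  refine ⟨.of_basis b, AddSubgroup.index_ne_zero_of_finite, ?_⟩
  rw [← b.mk_eq_rank'', AddSubgroup.index, Nat.cast_card]
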